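/- The squared L₂-norm of the proper-proper kernel satisfies ∫₀^∞∫₀^∞ ‖h_pp(t₁,t₂)‖₂² dt₁ dt₂ = trace(P_p·M·P_p·M), where h_pp(t₁,t₂) := vec(B^T·F_J(t₁)^T·M·F_J(t₂)·B) and ‖·‖₂ is the Euclidean norm on ℝ^{m²}. -/

import Mathlib

open MeasureTheory Matrix

/-- The matrix exponential of a real square matrix. -/
noncomputable def mexp {d : ℕ} (X : Matrix (Fin d) (Fin d) ℝ) : Matrix (Fin d) (Fin d) ℝ :=
  NormedSpace.exp X

/-- The operator norm on real matrices, induced by the Euclidean (`ℓ²`) norms. -/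
noncomputable def opNorm {d e : ℕ} (X : Matrix (Fin d) (Fin e) ℝ) : ℝ :=
  letI := Matrix.instL2OpNormedAddCommGroup (m := Fin d) (n := Fin e) (𝕜 := ℝ)
  ‖X‖

/-- Entrywise integral over `(0, ∞)` of a matrix-valued function. -/
noncomputable def matIntIoi {a b : Type*} (F : ℝ → Matrix a b ℝ) : Matrix a b ℝ :=
  Matrix.of fun i j => ∫ t in Set.Ioi (0:ℝ), F t i j

/-- Entrywise integrability over `(0, ∞)` of a matrix-valued function. -/
def MatIntegrableIoi {a b : Type*} (F : ℝ → Matrix a b ℝ) : Prop :=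
  ∀ i j, MeasureTheory.IntegrableOn (fun t => F t i j) (Set.Ioi 0)

/-- Kronecker product of two vectors in `ℝ^m`, an element of `ℝ^{m²}`. -/
def kron {m : ℕ} (a b : Fin m → ℝ) : Fin m × Fin m → ℝ := fun p => a p.1 * b p.2

/-- Vectorization of an `m × m` matrix as an element of `ℝ^{m²}`. -/
def vecm {m : ℕ} (X : Matrix (Fin m) (Fin m) ℝ) : Fin m × Fin m → ℝ := fun p => X p.1 p.2

/-- Squared Euclidean norm of a vector. -/
def enormSq {ι : Type*} [Fintype ι] (v : ι → ℝ) : ℝ := ∑ i, (v i) ^ 2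

/-- Euclidean inner product of two vectors. -/
def dotv {ι : Type*} [Fintype ι] (v w : ι → ℝ) : ℝ := ∑ i, v i * w i

/-! Write `G t = F_J t * B` and `S t = G t * (G t)ᵀ`. By cyclicity of the trace and symmetry of
`M`, the squared Euclidean norm of the kernel is `trace (M * S t₁ * M * S t₂)`. This is linear in
`S t₂` and, after a cyclic permutation, in `S t₁`, so each integral passes inside the trace and
turns the corresponding `S` into `P_p`. The entries of `S` decay like `exp (-2αt)`, which makes
them integrable on `(0, ∞)`. -/

lemma abs_apply_le_opNorm {d e : ℕ} (X : Matrix (Fin d) (Fin e) ℝ) (i : Fin d) (j : Fin e) :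
    |X i j| ≤ opNorm X := by
  let := Matrix.instL2OpNormedAddCommGroup (m := Fin d) (n := Fin e) (𝕜 := ℝ)
  have h := X.l2_opNorm_mulVec (EuclideanSpace.single j 1)
  rw [PiLp.norm_single, norm_one, mul_one] at h
  refine le_trans ?_ (le_trans (PiLp.norm_apply_le _ i) h)
  simp

lemma opNorm_nonneg {d e : ℕ} (X : Matrix (Fin d) (Fin e) ℝ) : 0 ≤ opNorm X :=
  let := Matrix.instL2OpNormedAddCommGroup (m := Fin d) (n := Fin e) (𝕜 := ℝ)
  norm_nonneg X

lemma continuous_mexp_smul {d : ℕ} (J : Matrix (Fin d) (Fin d) ℝ) :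
    Continuous fun t : ℝ => mexp (t • J) := by
  let := Matrix.linftyOpNormedRing (n := Fin d) (α := ℝ)
  let := Matrix.linftyOpNormedAlgebra (n := Fin d) (R := ℝ) (α := ℝ)
  let := NormedAlgebra.restrictScalars ℚ ℝ (Matrix (Fin d) (Fin d) ℝ)
  exact NormedSpace.exp_continuous.comp (continuous_id.smul continuous_const)

def ExpDecay {a b : Type*} (α : ℝ) (F : ℝ → Matrix a b ℝ) : Prop :=
  Continuous F ∧ ∃ c, ∀ t, 0 ≤ t → ∀ i j, |F t i j| ≤ c * Real.exp (-α * t)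

namespace ExpDecay

variable {a b c : Type*} {α β : ℝ}

lemma const [Fintype a] [Fintype b] (X : Matrix a b ℝ) : ExpDecay 0 fun _ => X := by
  let := Matrix.normedAddCommGroup (m := a) (n := b) (α := ℝ)
  exact ⟨continuous_const, ‖X‖, fun t _ i j => by
    simpa using X.norm_entry_le_entrywise_sup_norm (i := i) (j := j)⟩

lemma mul [Fintype b] {F : ℝ → Matrix a b ℝ} {G : ℝ → Matrix b c ℝ}
    (hF : ExpDecay α F) (hG : ExpDecay β G) : ExpDecay (α + β) fun t => F t * G t := by
  obtain ⟨hFc, cF, hFb⟩ := hF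
  obtain ⟨hGc, cG, hGb⟩ := hG
  refine ⟨hFc.matrix_mul hGc, Fintype.card b * (cF * cG), fun t ht i j => ?_⟩
  calc |(F t * G t) i j| ≤ ∑ k, |F t i k| * |G t k j| := by
        simpa only [Matrix.mul_apply, abs_mul] using
          Finset.abs_sum_le_sum_abs (fun k => F t i k * G t k j) Finset.univ
    _ ≤ ∑ _k : b, cF * Real.exp (-α * t) * (cG * Real.exp (-β * t)) := by
        gcongr with k
        · exact (abs_nonneg _).trans (hFb t ht i k)
        · exact hFb t ht i k
        · exact hGb t ht k j
    _ = Fintype.card b * (cF * cG) * Real.exp (-(α + β) * t) := by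
        rw [Finset.sum_const, Finset.card_univ, nsmul_eq_mul, neg_add, add_mul, Real.exp_add]
        ring

lemma transpose {F : ℝ → Matrix a b ℝ} (hF : ExpDecay α F) :
    ExpDecay α fun t => (F t)ᵀ :=
  ⟨hF.1.matrix_transpose, hF.2.imp fun _ h t ht i j => h t ht j i⟩

lemma matIntegrableIoi {F : ℝ → Matrix a b ℝ} (hF : ExpDecay α F) (hα : 0 < α) :
    MatIntegrableIoi F := by
  obtain ⟨hFc, cF, hFb⟩ := hF
  intro i j
  refine ((exp_neg_integrableOn_Ioi 0 hα).const_mul cF).mono'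
    (hFc.matrix_elem i j).aestronglyMeasurable ?_
  filter_upwards [ae_restrict_mem measurableSet_Ioi] with t ht
  simpa [Real.norm_eq_abs, neg_mul] using hFb t (le_of_lt ht) i j

end ExpDecay

lemma expDecay_fromBlocks_mexp {p q : ℕ} {J : Matrix (Fin p) (Fin p) ℝ} {C α : ℝ}
    (hJ : ∀ t : ℝ, 0 ≤ t → opNorm (mexp (t • J)) ≤ C * Real.exp (-α * t)) :
    ExpDecay α fun t => (fromBlocks (mexp (t • J)) 0 0 0 :
      Matrix (Fin p ⊕ Fin q) (Fin p ⊕ Fin q) ℝ) := by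
  refine ⟨(continuous_mexp_smul J).matrix_fromBlocks continuous_const continuous_const
    continuous_const, C, fun t ht => ?_⟩
  have hbound := hJ t ht
  rintro (i | i) (j | j)
  · exact (abs_apply_le_opNorm _ i j).trans hbound
  all_goals simpa using (opNorm_nonneg _).trans hbound

lemma enormSq_vecm {m : ℕ} (X : Matrix (Fin m) (Fin m) ℝ) :
    enormSq (vecm X) = trace (X * Xᵀ) := by
  simp [enormSq, vecm, trace, mul_apply, Fintype.sum_prod_type, sq]

lemma trace_sandwich_mul_transpose {R n m : Type*} [CommSemiring R] [Fintype n] [Fintype m]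
    (G₁ G₂ : Matrix n m R) {M : Matrix n n R} (hM : M.IsSymm) :
    trace (G₁ᵀ * M * G₂ * (G₁ᵀ * M * G₂)ᵀ) = trace (M * (G₁ * G₁ᵀ) * M * (G₂ * G₂ᵀ)) := by
  rw [transpose_mul, transpose_mul, transpose_transpose, hM.eq]
  simp only [← Matrix.mul_assoc]
  rw [trace_mul_cycle, trace_mul_cycle]
  simp only [← Matrix.mul_assoc]

lemma trace_mul_mul_mul_comm {R n : Type*} [CommSemiring R] [Fintype n] (M S P : Matrix n n R) :
    trace (M * S * M * P) = trace (M * P * M * S) := by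
  rw [Matrix.mul_assoc, Matrix.mul_assoc, trace_mul_comm, Matrix.mul_assoc, trace_mul_comm]

lemma integral_trace_mul {a b : Type*} [Fintype a] [Fintype b] (X : Matrix b a ℝ)
    {F : ℝ → Matrix a b ℝ} (hF : MatIntegrableIoi F) :
    ∫ t in Set.Ioi (0:ℝ), trace (X * F t) = trace (X * matIntIoi F) := by
  change ∫ t in Set.Ioi (0:ℝ), ∑ i, ∑ j, X i j * F t j i
    = ∑ i, ∑ j, X i j * ∫ t in Set.Ioi (0:ℝ), F t j i
  refine (integral_finsetSum _ fun i _ => integrable_finsetSum _ fun j _ =>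
    (hF j i).const_mul _).trans (Finset.sum_congr rfl fun i _ => ?_)
  refine (integral_finsetSum _ fun j _ => (hF j i).const_mul _).trans ?_
  exact Finset.sum_congr rfl fun j _ => integral_const_mul _ _

theorem proper_proper_kernel_norm_eq_trace_general
    {nf ni m : ℕ}
    -- Weierstraß canonical form data for the full-order system
    (Winv Tinv : Matrix (Fin nf ⊕ Fin ni) (Fin nf ⊕ Fin ni) ℝ)
    (J : Matrix (Fin nf) (Fin nf) ℝ)
    (C α : ℝ) (hα : 0 < α)
    (hJ : ∀ t : ℝ, 0 ≤ t → opNorm (mexp (t • J)) ≤ C * Real.exp (-α * t))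
    (B : Matrix (Fin nf ⊕ Fin ni) (Fin m) ℝ)
    (M : Matrix (Fin nf ⊕ Fin ni) (Fin nf ⊕ Fin ni) ℝ) (hM : M.IsSymm)
    -- fundamental solution matrices
    (FJ : ℝ → Matrix (Fin nf ⊕ Fin ni) (Fin nf ⊕ Fin ni) ℝ)
    (hFJ : ∀ t : ℝ, FJ t = Tinv * fromBlocks (mexp (t • J)) 0 0 0 * Winv)
    -- proper and improper controllability Gramians
    (Pp : Matrix (Fin nf ⊕ Fin ni) (Fin nf ⊕ Fin ni) ℝ)
    (hPp : Pp = matIntIoi fun t => FJ t * B * Bᵀ * (FJ t)ᵀ)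
    -- the proper-proper kernel
    (hpp : ℝ → ℝ → Fin m × Fin m → ℝ)
    (hhpp : ∀ t1 t2 : ℝ, hpp t1 t2 = vecm (Bᵀ * (FJ t1)ᵀ * M * FJ t2 * B)) :
    (∫ t1 in Set.Ioi (0:ℝ), ∫ t2 in Set.Ioi (0:ℝ), enormSq (hpp t1 t2)) =
      Matrix.trace (Pp * M * Pp * M) := by
  set S := fun t => FJ t * B * Bᵀ * (FJ t)ᵀ
  have hFJ_decay : ExpDecay α FJ := by
    simpa only [← funext hFJ, zero_add, add_zero] using
      ((ExpDecay.const Tinv).mul (expDecay_fromBlocks_mexp hJ)).mul (ExpDecay.const Winv)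
  have hS : MatIntegrableIoi S := by
    refine ExpDecay.matIntegrableIoi ?_ (add_pos hα hα)
    simpa only [add_zero] using
      ((hFJ_decay.mul (ExpDecay.const B)).mul (ExpDecay.const Bᵀ)).mul hFJ_decay.transpose
  have hkernel (t1 t2 : ℝ) : enormSq (hpp t1 t2) = trace (M * S t1 * M * S t2) := by
    have hS_eq (t : ℝ) : S t = (FJ t * B) * (FJ t * B)ᵀ := by
      simp only [S, transpose_mul, Matrix.mul_assoc]
    rw [hhpp, enormSq_vecm, hS_eq, hS_eq, ← trace_sandwich_mul_transpose _ _ hM]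
    simp only [transpose_mul, Matrix.mul_assoc]
  calc (∫ t1 in Set.Ioi (0:ℝ), ∫ t2 in Set.Ioi (0:ℝ), enormSq (hpp t1 t2))
      = ∫ t1 in Set.Ioi (0:ℝ), trace (M * S t1 * M * Pp) := by
        simp only [hkernel, integral_trace_mul _ hS, hPp]
    _ = ∫ t1 in Set.Ioi (0:ℝ), trace (M * Pp * M * S t1) := by
        simp only [trace_mul_mul_mul_comm M _ Pp]
    _ = trace (Pp * M * Pp * M) := by
        rw [integral_trace_mul _ hS, ← hPp, trace_mul_comm]
        simp only [Matrix.mul_assoc]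

/-- `∫₀^∞∫₀^∞ ‖h_pp(t₁,t₂)‖₂² dt₁ dt₂ = trace(P_p·M·P_p·M)`. -/
theorem proper_proper_kernel_norm_eq_trace
    {nf ni m : ℕ} (hm : 0 < m) (ν : ℕ) (hν : 0 < ν)
    -- Weierstraß canonical form data for the full-order system
    (W T Winv Tinv : Matrix (Fin nf ⊕ Fin ni) (Fin nf ⊕ Fin ni) ℝ)
    (hW : W * Winv = 1) (hW' : Winv * W = 1)
    (hT : T * Tinv = 1) (hT' : Tinv * T = 1)
    (J : Matrix (Fin nf) (Fin nf) ℝ) (N : Matrix (Fin ni) (Fin ni) ℝ) (hN : N ^ ν = 0)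
    (C α : ℝ) (hC : 0 < C) (hα : 0 < α)
    (hJ : ∀ t : ℝ, 0 ≤ t → opNorm (mexp (t • J)) ≤ C * Real.exp (-α * t))
    (E A : Matrix (Fin nf ⊕ Fin ni) (Fin nf ⊕ Fin ni) ℝ)
    (hE : E = W * fromBlocks 1 0 0 N * T)
    (hA : A = W * fromBlocks J 0 0 1 * T)
    (B : Matrix (Fin nf ⊕ Fin ni) (Fin m) ℝ)
    (M : Matrix (Fin nf ⊕ Fin ni) (Fin nf ⊕ Fin ni) ℝ) (hM : M.IsSymm)
    -- spectral projectors
    (Pr Pl : Matrix (Fin nf ⊕ Fin ni) (Fin nf ⊕ Fin ni) ℝ)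
    (hPr : Pr = Tinv * fromBlocks 1 0 0 0 * T)
    (hPl : Pl = W * fromBlocks 1 0 0 0 * Winv)
    -- fundamental solution matrices
    (FJ : ℝ → Matrix (Fin nf ⊕ Fin ni) (Fin nf ⊕ Fin ni) ℝ)
    (hFJ : ∀ t : ℝ, FJ t = Tinv * fromBlocks (mexp (t • J)) 0 0 0 * Winv)
    (FN : ℕ → Matrix (Fin nf ⊕ Fin ni) (Fin nf ⊕ Fin ni) ℝ)
    (hFN : ∀ k : ℕ, FN k = Tinv * fromBlocks 0 0 0 (-(N ^ k)) * Winv)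
    -- proper and improper controllability Gramians
    (Pp : Matrix (Fin nf ⊕ Fin ni) (Fin nf ⊕ Fin ni) ℝ)
    (hPp : Pp = matIntIoi fun t => FJ t * B * Bᵀ * (FJ t)ᵀ)
    (Pimp : Matrix (Fin nf ⊕ Fin ni) (Fin nf ⊕ Fin ni) ℝ)
    (hPimp : Pimp = ∑ k ∈ Finset.range ν, FN k * B * Bᵀ * (FN k)ᵀ)
    -- the proper-proper kernel
    (hpp : ℝ → ℝ → Fin m × Fin m → ℝ)
    (hhpp : ∀ t1 t2 : ℝ, hpp t1 t2 = vecm (Bᵀ * (FJ t1)ᵀ * M * FJ t2 * B)) :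
    (∫ t1 in Set.Ioi (0:ℝ), ∫ t2 in Set.Ioi (0:ℝ), enormSq (hpp t1 t2)) =
      Matrix.trace (Pp * M * Pp * M) :=
  proper_proper_kernel_norm_eq_trace_general Winv Tinv J C α hα hJ B M hM FJ hFJ Pp hPp hpp hhpp
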